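/- arXiv:1805.05432 — 2 statements merged into one kernel-verified Lean document; each statement's English description precedes it below -/
import Mathlib

section
/- Let G1, G2 ∈ ℝ^{n×n} be symmetric positive definite matrices. Define R̂1 = chol(G1⁻¹), R̂2 = chol(G2⁻¹), R̂3 = chol((G1 + G2)⁻¹), R̂4 = chol(G1⁻¹(G1⁻¹ + G2⁻¹)⁻¹G1⁻¹), and R̂5 = chol(G2⁻¹(G1⁻¹ + G2⁻¹)⁻¹G2⁻¹). Then for every i = 1, 2, …, n: λ_i(R̂1) ≥ max{ √(λ_i(R̂3)² + λ_1(R̂4)²), √(λ_i(R̂4)² + λ_1(R̂3)²) } and λ_i(R̂2) ≥ max{ √(λ_i(R̂3)² + λ_1(R̂5)²), √(λ_i(R̂5)² + λ_1(R̂3)²) }. -/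
open Matrix

noncomputable section

/-- Euclidean norm of a real vector. -/
def euclNorm {m : ℕ} (x : Fin m → ℝ) : ℝ := Real.sqrt (∑ k, x k ^ 2)

/-- The lattice vector `A z` for an integer vector `z`. -/
def latticeVec {m n : ℕ} (A : Matrix (Fin m) (Fin n) ℝ) (z : Fin n → ℤ) : Fin m → ℝ :=
  A.mulVec fun k => (z k : ℝ)

/-- The `i`-th successive minimum of the lattice generated by `A`: the smallest `r ≥ 0` such
that the closed ball of radius `r` centered at the origin contains `i` linearly independent
lattice vectors. -/
def succMin {m n : ℕ} (A : Matrix (Fin m) (Fin n) ℝ) (i : ℕ) : ℝ :=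
  sInf {r : ℝ | 0 ≤ r ∧ ∃ v : Fin i → (Fin n → ℤ),
    LinearIndependent ℝ (fun j => latticeVec A (v j)) ∧
    ∀ j, euclNorm (latticeVec A (v j)) ≤ r}

/-- `R` is the Cholesky factor of `G`: `R` is upper triangular with positive diagonal
entries and `Rᵀ * R = G`. -/
def IsCholesky {n : ℕ} (G R : Matrix (Fin n) (Fin n) ℝ) : Prop :=
  R.BlockTriangular id ∧ (∀ j, 0 < R j j) ∧ Rᵀ * R = G

/-!
Woodbury's identity gives `G₁⁻¹ = (G₁ + G₂)⁻¹ + G₁⁻¹ (G₁⁻¹ + G₂⁻¹)⁻¹ G₁⁻¹`, i.e.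
`R̂₁ᵀR̂₁ = R̂₃ᵀR̂₃ + R̂₄ᵀR̂₄`, so `‖R̂₁z‖² = ‖R̂₃z‖² + ‖R̂₄z‖²` for every integer vector `z`.
If `R̂₁z₁, …, R̂₁zᵢ` are independent of norm at most `r`, then every `zⱼ ≠ 0`, so
`‖R̂₄zⱼ‖ ≥ λ₁(R̂₄)` and `‖R̂₃zⱼ‖² ≤ r² - λ₁(R̂₄)²`; as the `R̂₃zⱼ` are again independent,
`λᵢ(R̂₃)² + λ₁(R̂₄)² ≤ r²`. The roles of `R̂₃, R̂₄` are symmetric, and `G₂` is handled alike.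
-/

theorem Matrix.inv_sub_inv_add {ι α : Type*} [Fintype ι] [DecidableEq ι] [CommRing α]
    {G H : Matrix ι ι α} (hG : IsUnit G) (hH : IsUnit H) (hGH : IsUnit (G⁻¹ + H⁻¹)) :
    G⁻¹ - (G + H)⁻¹ = G⁻¹ * (G⁻¹ + H⁻¹)⁻¹ * G⁻¹ := by
  have woodbury := add_mul_mul_inv_eq_sub G 1 H 1 hG hH (by simpa [add_comm] using hGH)
  simp only [Matrix.mul_one, Matrix.one_mul, add_comm H⁻¹] at woodbury
  rw [woodbury, sub_sub_cancel]

theorem IsCholesky.mulVec_injective {n : ℕ} {G R : Matrix (Fin n) (Fin n) ℝ}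
    (h : IsCholesky G R) : Function.Injective R.mulVec := by
  refine mulVec_injective_iff_isUnit.mpr ((isUnit_iff_isUnit_det R).mpr ?_)
  rw [det_of_isUpperTriangular h.1]
  exact (Finset.prod_pos fun j _ => h.2.1 j).ne'.isUnit

section Lattice

variable {m n : ℕ}

theorem euclNorm_nonneg (x : Fin m → ℝ) : 0 ≤ euclNorm x := Real.sqrt_nonneg _

theorem latticeVec_zero (A : Matrix (Fin m) (Fin n) ℝ) : latticeVec A 0 = 0 := by
  simp only [latticeVec, Pi.zero_apply, Int.cast_zero]
  exact A.mulVec_zero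

theorem euclNorm_latticeVec_sq (A : Matrix (Fin m) (Fin n) ℝ) (z : Fin n → ℤ) :
    euclNorm (latticeVec A z) ^ 2 =
      (fun k => (z k : ℝ)) ⬝ᵥ (Aᵀ * A) *ᵥ fun k => (z k : ℝ) := by
  rw [euclNorm, Real.sq_sqrt (Finset.sum_nonneg fun k _ => sq_nonneg _), latticeVec,
    ← mulVec_mulVec, dotProduct_mulVec, vecMul_transpose]
  simp only [dotProduct, sq]

theorem euclNorm_latticeVec_sq_of_gram_eq_add {p q : ℕ} {A : Matrix (Fin m) (Fin n) ℝ}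
    {B : Matrix (Fin p) (Fin n) ℝ} {C : Matrix (Fin q) (Fin n) ℝ}
    (hgram : Aᵀ * A = Bᵀ * B + Cᵀ * C) (z : Fin n → ℤ) :
    euclNorm (latticeVec A z) ^ 2 =
      euclNorm (latticeVec B z) ^ 2 + euclNorm (latticeVec C z) ^ 2 := by
  simp only [euclNorm_latticeVec_sq, hgram, add_mulVec, dotProduct_add]

theorem linearIndependent_latticeVec_iff {ι : Type*} {A : Matrix (Fin m) (Fin n) ℝ}
    (hA : Function.Injective A.mulVec) (v : ι → Fin n → ℤ) :
    LinearIndependent ℝ (fun j => latticeVec A (v j)) ↔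
      LinearIndependent ℝ (fun j k => (v j k : ℝ)) :=
  LinearMap.linearIndependent_iff A.mulVecLin (LinearMap.ker_eq_bot.mpr hA)

theorem succMin_nonneg (A : Matrix (Fin m) (Fin n) ℝ) (i : ℕ) : 0 ≤ succMin A i :=
  Real.sInf_nonneg fun _ hr => hr.1

theorem succMin_le {A : Matrix (Fin m) (Fin n) ℝ} {i : ℕ} {r : ℝ} (hr : 0 ≤ r)
    (v : Fin i → Fin n → ℤ) (hv : LinearIndependent ℝ (fun j => latticeVec A (v j)))
    (hvr : ∀ j, euclNorm (latticeVec A (v j)) ≤ r) : succMin A i ≤ r :=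
  csInf_le ⟨0, fun _ hr => hr.1⟩ ⟨hr, v, hv, hvr⟩

theorem succMin_one_le {A : Matrix (Fin m) (Fin n) ℝ} (hA : Function.Injective A.mulVec)
    {z : Fin n → ℤ} (hz : z ≠ 0) : succMin A 1 ≤ euclNorm (latticeVec A z) := by
  refine succMin_le (euclNorm_nonneg _) (fun _ => z) ?_ fun _ => le_rfl
  refine linearIndependent_unique_iff.mpr fun h => hz ?_
  rw [← latticeVec_zero A] at h
  exact funext fun k => by exact_mod_cast congrFun (hA h) k

theorem succMin_set_nonempty {A : Matrix (Fin m) (Fin n) ℝ} (hA : Function.Injective A.mulVec)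
    {i : ℕ} (hin : i ≤ n) :
    {r : ℝ | 0 ≤ r ∧ ∃ v : Fin i → (Fin n → ℤ),
      LinearIndependent ℝ (fun j => latticeVec A (v j)) ∧
      ∀ j, euclNorm (latticeVec A (v j)) ≤ r}.Nonempty := by
  let v : Fin i → Fin n → ℤ := fun j => Pi.single (Fin.castLE hin j) 1
  have hv : LinearIndependent ℝ (fun j => latticeVec A (v j)) := by
    rw [linearIndependent_latticeVec_iff hA]
    convert (Pi.basisFun ℝ (Fin n)).linearIndependent.comp _ (Fin.castLE_injective hin)
      using 1
    funext j k
    simp only [v, Function.comp_apply, Pi.basisFun_apply, Pi.single_apply]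
    split_ifs <;> simp
  exact ⟨∑ j, euclNorm (latticeVec A (v j)),
    Finset.sum_nonneg fun j _ => euclNorm_nonneg _, v, hv,
    fun j => Finset.single_le_sum (f := fun j => euclNorm (latticeVec A (v j)))
      (fun j _ => euclNorm_nonneg _) (Finset.mem_univ j)⟩

theorem sqrt_succMin_sq_add_succMin_one_sq_le {p q : ℕ} {A : Matrix (Fin m) (Fin n) ℝ}
    {B : Matrix (Fin p) (Fin n) ℝ} {C : Matrix (Fin q) (Fin n) ℝ}
    (hA : Function.Injective A.mulVec) (hB : Function.Injective B.mulVec)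
    (hC : Function.Injective C.mulVec) (hgram : Aᵀ * A = Bᵀ * B + Cᵀ * C)
    {i : ℕ} (hi : 1 ≤ i) (hin : i ≤ n) :
    Real.sqrt (succMin B i ^ 2 + succMin C 1 ^ 2) ≤ succMin A i := by
  refine le_csInf (succMin_set_nonempty hA hin) ?_
  rintro r ⟨hr, v, hv, hvr⟩
  have hBv : ∀ j, euclNorm (latticeVec B (v j)) ^ 2 ≤ r ^ 2 - succMin C 1 ^ 2 := by
    intro j
    have hvj : v j ≠ 0 := fun h => hv.ne_zero j (by rw [h, latticeVec_zero])
    have hC1 := pow_le_pow_left₀ (succMin_nonneg C 1) (succMin_one_le hC hvj) 2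
    have hAr := pow_le_pow_left₀ (euclNorm_nonneg _) (hvr j) 2
    linarith [euclNorm_latticeVec_sq_of_gram_eq_add hgram (v j)]
  have hgap : 0 ≤ r ^ 2 - succMin C 1 ^ 2 := (sq_nonneg _).trans (hBv ⟨0, hi⟩)
  have hvB : LinearIndependent ℝ (fun j => latticeVec B (v j)) :=
    (linearIndependent_latticeVec_iff hB v).mpr ((linearIndependent_latticeVec_iff hA v).mp hv)
  have hBi : succMin B i ≤ Real.sqrt (r ^ 2 - succMin C 1 ^ 2) :=
    succMin_le (Real.sqrt_nonneg _) v hvB fun j =>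
      (Real.le_sqrt (euclNorm_nonneg _) hgap).mpr (hBv j)
  rw [Real.sqrt_le_left hr]
  linarith [(Real.le_sqrt (succMin_nonneg B i) hgap).mp hBi]

theorem max_sqrt_succMin_sq_add_succMin_one_sq_le {p q : ℕ} {A : Matrix (Fin m) (Fin n) ℝ}
    {B : Matrix (Fin p) (Fin n) ℝ} {C : Matrix (Fin q) (Fin n) ℝ}
    (hA : Function.Injective A.mulVec) (hB : Function.Injective B.mulVec)
    (hC : Function.Injective C.mulVec) (hgram : Aᵀ * A = Bᵀ * B + Cᵀ * C)
    {i : ℕ} (hi : 1 ≤ i) (hin : i ≤ n) :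
    max (Real.sqrt (succMin B i ^ 2 + succMin C 1 ^ 2))
      (Real.sqrt (succMin C i ^ 2 + succMin B 1 ^ 2)) ≤ succMin A i :=
  max_le (sqrt_succMin_sq_add_succMin_one_sq_le hA hB hC hgram hi hin)
    (sqrt_succMin_sq_add_succMin_one_sq_le hA hC hB (hgram.trans (add_comm _ _)) hi hin)

end Lattice

theorem statement3 {n : ℕ} (G1 G2 : Matrix (Fin n) (Fin n) ℝ)
    (hG1 : G1.PosDef) (hG2 : G2.PosDef)
    (Rh1 Rh2 Rh3 Rh4 Rh5 : Matrix (Fin n) (Fin n) ℝ)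
    (hRh1 : IsCholesky G1⁻¹ Rh1) (hRh2 : IsCholesky G2⁻¹ Rh2)
    (hRh3 : IsCholesky (G1 + G2)⁻¹ Rh3)
    (hRh4 : IsCholesky (G1⁻¹ * (G1⁻¹ + G2⁻¹)⁻¹ * G1⁻¹) Rh4)
    (hRh5 : IsCholesky (G2⁻¹ * (G1⁻¹ + G2⁻¹)⁻¹ * G2⁻¹) Rh5) :
    ∀ i : ℕ, 1 ≤ i → i ≤ n →
      succMin Rh1 i ≥
        max (Real.sqrt (succMin Rh3 i ^ 2 + succMin Rh4 1 ^ 2))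
            (Real.sqrt (succMin Rh4 i ^ 2 + succMin Rh3 1 ^ 2)) ∧
      succMin Rh2 i ≥
        max (Real.sqrt (succMin Rh3 i ^ 2 + succMin Rh5 1 ^ 2))
            (Real.sqrt (succMin Rh5 i ^ 2 + succMin Rh3 1 ^ 2)) := by
  intro i hi hin
  have hgram1 : Rh1ᵀ * Rh1 = Rh3ᵀ * Rh3 + Rh4ᵀ * Rh4 := by
    rw [hRh1.2.2, hRh3.2.2, hRh4.2.2]
    exact sub_eq_iff_eq_add'.mp
      (inv_sub_inv_add hG1.isUnit hG2.isUnit (hG1.inv.add hG2.inv).isUnit)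
  have hgram2 : Rh2ᵀ * Rh2 = Rh3ᵀ * Rh3 + Rh5ᵀ * Rh5 := by
    rw [hRh2.2.2, hRh3.2.2, hRh5.2.2, add_comm G1, add_comm G1⁻¹]
    exact sub_eq_iff_eq_add'.mp
      (inv_sub_inv_add hG2.isUnit hG1.isUnit (hG2.inv.add hG1.inv).isUnit)
  exact ⟨max_sqrt_succMin_sq_add_succMin_one_sq_le hRh1.mulVec_injective
      hRh3.mulVec_injective hRh4.mulVec_injective hgram1 hi hin,
    max_sqrt_succMin_sq_add_succMin_one_sq_le hRh2.mulVec_injective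
      hRh3.mulVec_injective hRh5.mulVec_injective hgram2 hi hin⟩
end
end

section
/- Let G ∈ ℝ^{n×n} be a symmetric positive definite matrix, let I be the n×n identity, and let d > 0. Define F̄(d) = chol(d⁻¹G + I) and F̂ = chol(G). Then λ_n(F̄(d)) ≥ √( d⁻¹·|det(F̂)|^{2/n} + 1 ) = √( d⁻¹·det(G)^{1/n} + 1 ). -/
open Matrix

noncomputable section

/-!
For `n` linearly independent lattice vectors `F̄ zⱼ` with integer `zⱼ`, the identity
`F̄ᵀF̄ = d⁻¹ F̂ᵀF̂ + I` gives `‖F̄ zⱼ‖² = d⁻¹ ‖F̂ zⱼ‖² + ‖zⱼ‖²`, and `‖zⱼ‖² ≥ 1` since `zⱼ` is a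
nonzero integer vector. Hadamard's inequality applied to `F̂ Z`, where `Z` has the columns `zⱼ`
and `|det Z| ≥ 1` is a nonzero integer, gives `|det F̂|² ≤ ∏ⱼ ‖F̂ zⱼ‖²`, so some factor is at least
`|det F̂|^{2/n}`; the corresponding lattice vector has norm at least the stated bound.
-/

lemma euclNorm_eq_norm_toLp {m : ℕ} (x : Fin m → ℝ) : euclNorm x = ‖WithLp.toLp 2 x‖ := by
  simp [euclNorm, EuclideanSpace.norm_eq, sq_abs]

lemma euclNorm_sq {m : ℕ} (x : Fin m → ℝ) : euclNorm x ^ 2 = x ⬝ᵥ x := by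
  rw [euclNorm, Real.sq_sqrt (by positivity)]
  simp [dotProduct, sq]

lemma euclNorm_sq_mulVec {m n : ℕ} (A : Matrix (Fin m) (Fin n) ℝ) (x : Fin n → ℝ) :
    euclNorm (A *ᵥ x) ^ 2 = ((Aᵀ * A) *ᵥ x) ⬝ᵥ x := by
  rw [euclNorm_sq, dotProduct_mulVec, ← mulVec_transpose, mulVec_mulVec, dotProduct_comm]

lemma euclNorm_sq_mulVec_of_transpose_mul_self_eq {m k n : ℕ} {A : Matrix (Fin m) (Fin n) ℝ}
    {B : Matrix (Fin k) (Fin n) ℝ} {c : ℝ} (hAB : Aᵀ * A = c • (Bᵀ * B) + 1) (x : Fin n → ℝ) :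
    euclNorm (A *ᵥ x) ^ 2 = c * euclNorm (B *ᵥ x) ^ 2 + euclNorm x ^ 2 := by
  rw [euclNorm_sq_mulVec, euclNorm_sq_mulVec, euclNorm_sq, hAB, add_mulVec, one_mulVec,
    add_dotProduct, smul_mulVec, smul_dotProduct, smul_eq_mul]

lemma one_le_euclNorm_sq_intCast {m : ℕ} {z : Fin m → ℤ} (hz : z ≠ 0) :
    1 ≤ euclNorm (fun k => (z k : ℝ)) ^ 2 := by
  obtain ⟨k, hk⟩ := Function.ne_iff.mp hz
  have hk_sq : (1 : ℝ) ≤ (z k : ℝ) ^ 2 := by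
    rw [← sq_abs, ← Int.cast_abs]
    exact one_le_pow₀ (by exact_mod_cast Int.one_le_abs hk)
  calc (1 : ℝ) ≤ (z k : ℝ) ^ 2 := hk_sq
    _ ≤ ∑ i, (z i : ℝ) ^ 2 := Finset.single_le_sum (f := fun i => (z i : ℝ) ^ 2)
      (fun i _ => sq_nonneg _) (Finset.mem_univ k)
    _ = euclNorm (fun k => (z k : ℝ)) ^ 2 := by rw [euclNorm, Real.sq_sqrt (by positivity)]

/-- Hadamard's inequality. -/
theorem abs_det_le_prod_euclNorm_col {n : ℕ} (W : Matrix (Fin n) (Fin n) ℝ) :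
    |W.det| ≤ ∏ j, euclNorm (W.col j) := by
  have : Fact (Module.finrank ℝ (EuclideanSpace ℝ (Fin n)) = n) :=
    ⟨finrank_euclideanSpace_fin⟩
  let b := (EuclideanSpace.basisFun (Fin n) ℝ).toBasis
  let v : Fin n → EuclideanSpace ℝ (Fin n) := fun j => WithLp.toLp 2 (W.col j)
  have hdet : b.det v = W.det := by
    rw [Module.Basis.det_apply]
    rfl
  calc |W.det| = |b.orientation.volumeForm v| := by
        rw [b.orientation.volumeForm_robust' (EuclideanSpace.basisFun (Fin n) ℝ) v, hdet]
    _ ≤ ∏ j, ‖v j‖ := b.orientation.abs_volumeForm_apply_le v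
    _ = ∏ j, euclNorm (W.col j) := by simp only [v, euclNorm_eq_norm_toLp]

lemma det_map_intCast {n : ℕ} (Z : Matrix (Fin n) (Fin n) ℤ) :
    (Z.map (Int.cast : ℤ → ℝ)).det = Z.det :=
  (RingHom.map_det (Int.castRingHom ℝ) Z).symm

lemma one_le_abs_det_intCast {n : ℕ} {Z : Matrix (Fin n) (Fin n) ℤ} (hZ : Z.det ≠ 0) :
    1 ≤ |(Z.map (Int.cast : ℤ → ℝ)).det| := by
  rw [det_map_intCast, ← Int.cast_abs]
  exact_mod_cast Int.one_le_abs hZ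

lemma exists_le_of_pow_card_le_prod {ι : Type*} [Fintype ι] [Nonempty ι] {a : ι → ℝ}
    (ha : ∀ i, 0 ≤ a i) {c : ℝ} (hc : 0 ≤ c) (h : c ^ Fintype.card ι ≤ ∏ i, a i) :
    ∃ i, c ≤ a i := by
  obtain ⟨i, hi⟩ := Finite.exists_max a
  refine ⟨i, (pow_le_pow_iff_left₀ hc (ha i) Fintype.card_ne_zero).mp (h.trans ?_)⟩
  calc ∏ j, a j ≤ ∏ _j : ι, a i := Finset.prod_le_prod (fun j _ => ha j) (fun j _ => hi j)
    _ = a i ^ Fintype.card ι := by rw [Finset.prod_const, Finset.card_univ]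

lemma abs_rpow_two_div_pow {n : ℕ} (hn : n ≠ 0) (x : ℝ) :
    (|x| ^ ((2 : ℝ) / n)) ^ n = x ^ 2 := by
  rw [← Real.rpow_natCast, ← Real.rpow_mul (abs_nonneg x),
    div_mul_cancel₀ _ (Nat.cast_ne_zero.mpr hn), Real.rpow_two, sq_abs]

theorem exists_abs_det_rpow_le_euclNorm_sq {n : ℕ} (hn : 0 < n) (B : Matrix (Fin n) (Fin n) ℝ)
    {v : Fin n → Fin n → ℤ} (hv : LinearIndependent ℝ fun j k => (v j k : ℝ)) :
    ∃ j, |B.det| ^ ((2 : ℝ) / n) ≤ euclNorm (B *ᵥ fun k => (v j k : ℝ)) ^ 2 := by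
  have : Nonempty (Fin n) := ⟨⟨0, hn⟩⟩
  let Z : Matrix (Fin n) (Fin n) ℝ := ((Matrix.of v).map (Int.cast : ℤ → ℝ))ᵀ
  have hZ : 1 ≤ |Z.det| := by
    rw [det_transpose]
    refine one_le_abs_det_intCast fun h0 => ?_
    have hunit : IsUnit Z := linearIndependent_cols_iff_isUnit.mp hv
    rw [Matrix.isUnit_iff_isUnit_det, det_transpose, det_map_intCast, h0, Int.cast_zero] at hunit
    exact not_isUnit_zero hunit
  have hcol : ∀ j, (B * Z).col j = B *ᵥ fun k => (v j k : ℝ) := fun j => by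
    ext i
    simp [Z, mul_apply, mulVec, dotProduct]
  have hprod : B.det ^ 2 ≤ ∏ j, euclNorm (B *ᵥ fun k => (v j k : ℝ)) ^ 2 := by
    calc B.det ^ 2 ≤ (B.det * Z.det) ^ 2 := by
          rw [mul_pow, ← sq_abs Z.det]
          exact le_mul_of_one_le_right (sq_nonneg _) (one_le_pow₀ hZ)
      _ = |(B * Z).det| ^ 2 := by rw [sq_abs, det_mul]
      _ ≤ (∏ j, euclNorm ((B * Z).col j)) ^ 2 :=
          pow_le_pow_left₀ (abs_nonneg _) (abs_det_le_prod_euclNorm_col _) 2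
      _ = ∏ j, euclNorm (B *ᵥ fun k => (v j k : ℝ)) ^ 2 := by
          simp only [hcol, Finset.prod_pow]
  refine exists_le_of_pow_card_le_prod (fun j => sq_nonneg _) (by positivity) ?_
  rwa [Fintype.card_fin, abs_rpow_two_div_pow hn.ne']

lemma le_succMin {m n : ℕ} {A : Matrix (Fin m) (Fin n) ℝ} (hA : LinearIndependent ℝ A.col)
    {c : ℝ} (h : ∀ v : Fin n → Fin n → ℤ, LinearIndependent ℝ (fun j => latticeVec A (v j)) →
      ∃ j, c ≤ euclNorm (latticeVec A (v j))) :
    c ≤ succMin A n := by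
  have hsingle : ∀ j : Fin n, latticeVec A (Pi.single j 1) = A.col j := fun j => by
    rw [latticeVec, ← mulVec_single_one]
    congr 1
    ext k
    simp [Pi.single_apply]
  refine le_csInf ⟨∑ j, euclNorm (A.col j), ?_, fun j => Pi.single j 1, ?_, fun j => ?_⟩ ?_
  · exact Finset.sum_nonneg fun j _ => Real.sqrt_nonneg _
  · simpa only [hsingle] using hA
  · rw [hsingle]
    exact Finset.single_le_sum (f := fun i => euclNorm (A.col i))
      (fun i _ => Real.sqrt_nonneg _) (Finset.mem_univ j)
  · rintro r ⟨-, v, hv, hvr⟩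
    obtain ⟨j, hj⟩ := h v hv
    exact hj.trans (hvr j)

namespace IsCholesky

variable {n : ℕ} {G R : Matrix (Fin n) (Fin n) ℝ}

lemma det_sq (hR : IsCholesky G R) : R.det ^ 2 = G.det := by
  rw [← hR.2.2, det_mul, det_transpose, sq]

lemma isUnit (hR : IsCholesky G R) : IsUnit R := by
  rw [Matrix.isUnit_iff_isUnit_det, det_of_isUpperTriangular hR.1]
  exact (Finset.prod_pos fun i _ => hR.2.1 i).ne'.isUnit

lemma abs_det_rpow (hR : IsCholesky G R) :
    |R.det| ^ ((2 : ℝ) / n) = G.det ^ ((1 : ℝ) / n) := by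
  rw [div_eq_mul_one_div 2, Real.rpow_mul (abs_nonneg _), Real.rpow_two, sq_abs, hR.det_sq]

end IsCholesky

theorem statement14_general {n : ℕ} (hn : 0 < n) (G : Matrix (Fin n) (Fin n) ℝ)
    (d : ℝ) (hd : 0 < d) (Fbar Fhat : Matrix (Fin n) (Fin n) ℝ)
    (hFbar : IsCholesky (d⁻¹ • G + 1) Fbar) (hFhat : IsCholesky G Fhat) :
    succMin Fbar n ≥ Real.sqrt (d⁻¹ * |Fhat.det| ^ ((2 : ℝ) / n) + 1) ∧
    Real.sqrt (d⁻¹ * |Fhat.det| ^ ((2 : ℝ) / n) + 1)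
      = Real.sqrt (d⁻¹ * G.det ^ ((1 : ℝ) / n) + 1) := by
  refine ⟨le_succMin (linearIndependent_cols_iff_isUnit.mpr hFbar.isUnit) fun v hv => ?_,
    by rw [hFhat.abs_det_rpow]⟩
  have hz : LinearIndependent ℝ fun j k => (v j k : ℝ) := hv.of_comp Fbar.mulVecLin
  obtain ⟨j, hj⟩ := exists_abs_det_rpow_le_euclNorm_sq hn Fhat hz
  have hnorm := euclNorm_sq_mulVec_of_transpose_mul_self_eq
    (by rw [hFbar.2.2, hFhat.2.2] : Fbarᵀ * Fbar = d⁻¹ • (Fhatᵀ * Fhat) + 1)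
    fun k => (v j k : ℝ)
  refine ⟨j, Real.sqrt_le_iff.mpr ⟨Real.sqrt_nonneg _, ?_⟩⟩
  rw [latticeVec, hnorm]
  exact add_le_add (mul_le_mul_of_nonneg_left hj (inv_nonneg.mpr hd.le))
    (one_le_euclNorm_sq_intCast fun h => hz.ne_zero j (by ext; simp [h]))

theorem statement14 {n : ℕ} (hn : 0 < n) (G : Matrix (Fin n) (Fin n) ℝ) (hG : G.PosDef)
    (d : ℝ) (hd : 0 < d) (Fbar Fhat : Matrix (Fin n) (Fin n) ℝ)
    (hFbar : IsCholesky (d⁻¹ • G + 1) Fbar) (hFhat : IsCholesky G Fhat) :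
    succMin Fbar n ≥ Real.sqrt (d⁻¹ * |Fhat.det| ^ ((2 : ℝ) / n) + 1) ∧
    Real.sqrt (d⁻¹ * |Fhat.det| ^ ((2 : ℝ) / n) + 1)
      = Real.sqrt (d⁻¹ * G.det ^ ((1 : ℝ) / n) + 1) :=
  statement14_general hn G d hd Fbar Fhat hFbar hFhat
end
end
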